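/- arXiv:1105.3448 — 6 statements merged into one kernel-verified Lean document; each statement's English description precedes it below -/
import Mathlib

section
/- If A is self-adjoint and positive definite on a finite-dimensional Hilbert space H and u solves the second-order equation d²u/dt² + A u = f(t) with u(0)=u⁰, u'(0)=v⁰, then ‖u'(t)‖_A² + ‖A u(t)‖² ≤ exp(t) ( ‖A u⁰‖² + ‖v⁰‖_A² + ∫₀ᵗ exp(−θ) ‖f(θ)‖_A² dθ ). -/
/-!
The energy `E = ⟪A u', u'⟫ + ‖A u‖²` satisfies `E' = 2 ⟪A u', u'' + A u⟫ = 2 ⟪A u', f⟫`, and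
`⟪A (u' - f), u' - f⟫ ≥ 0` gives `E' ≤ E + ⟪A f, f⟫`.
Gronwall's lemma, proved with the integrating factor `exp (-t)`, yields the bound.
-/

open Real Set
open scoped RealInnerProductSpace

theorem le_exp_mul_integral_of_hasDerivAt_le_mul_add {E E' g : ℝ → ℝ} {K T : ℝ}
    (hg : Continuous g) (hE : ∀ t ∈ Icc 0 T, HasDerivAt E (E' t) t)
    (hE' : ∀ t ∈ Icc 0 T, E' t ≤ K * E t + g t) :
    ∀ t ∈ Icc 0 T, E t ≤ exp (K * t) * (E 0 + ∫ θ in 0..t, exp (-(K * θ)) * g θ) := by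
  set φ : ℝ → ℝ := fun t => exp (-(K * t)) * E t - ∫ θ in 0..t, exp (-(K * θ)) * g θ
  have hφ : ∀ t ∈ Icc 0 T, HasDerivAt φ (exp (-(K * t)) * (E' t - K * E t - g t)) t := by
    intro t ht
    have hexp : HasDerivAt (fun s => exp (-(K * s))) (exp (-(K * t)) * -K) t := by
      simpa using ((hasDerivAt_id t).const_mul K).neg.exp
    have hint : HasDerivAt (fun s => ∫ θ in 0..s, exp (-(K * θ)) * g θ)
        (exp (-(K * t)) * g t) t :=
      ((by fun_prop : Continuous fun θ => exp (-(K * θ)) * g θ).integral_hasStrictDerivAt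
        0 t).hasDerivAt
    exact ((hexp.mul (hE t ht)).sub hint).congr_deriv (by ring)
  have hanti : AntitoneOn φ (Icc 0 T) :=
    antitoneOn_of_hasDerivWithinAt_nonpos (convex_Icc 0 T)
      (fun t ht => (hφ t ht).continuousAt.continuousWithinAt)
      (fun t ht => (hφ t (interior_subset ht)).hasDerivWithinAt)
      (fun t ht => mul_nonpos_of_nonneg_of_nonpos (exp_pos _).le
        (by linarith [hE' t (interior_subset ht)]))
  intro t ht
  have hφt : φ t ≤ E 0 := by
    simpa [φ] using hanti ⟨le_rfl, ht.1.trans ht.2⟩ ht ht.1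
  calc E t = exp (K * t) * (exp (-(K * t)) * E t) := by
        rw [← mul_assoc, ← exp_add, add_neg_cancel, exp_zero, one_mul]
    _ ≤ exp (K * t) * (E 0 + ∫ θ in 0..t, exp (-(K * θ)) * g θ) := by
        gcongr
        linarith

section Energy

variable {H : Type*} [NormedAddCommGroup H] [InnerProductSpace ℝ H]

theorem ContinuousLinearMap.IsPositive.two_mul_inner_le {A : H →L[ℝ] H} (hA : A.IsPositive)
    (x y : H) : 2 * ⟪A x, y⟫ ≤ ⟪A x, x⟫ + ⟪A y, y⟫ := by
  have hsymm : ⟪A y, x⟫ = ⟪A x, y⟫ := by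
    rw [hA.inner_left_eq_inner_right, real_inner_comm]
  have hdiff := hA.inner_nonneg_left (x - y)
  rw [map_sub, inner_sub_left, inner_sub_right, inner_sub_right, hsymm] at hdiff
  linarith

theorem hasDerivAt_inner_map_add_norm_map_sq {A : H →L[ℝ] H}
    (hA : (A : H →ₗ[ℝ] H).IsSymmetric) {u u' : ℝ → H} {a : H} {t : ℝ}
    (hu : HasDerivAt u (u' t) t) (hu' : HasDerivAt u' a t) :
    HasDerivAt (fun s => ⟪A (u' s), u' s⟫ + ‖A (u s)‖ ^ 2) (2 * ⟪A (u' t), a + A (u t)⟫) t := by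
  have hsymm : ⟪A a, u' t⟫ = ⟪A (u' t), a⟫ := by
    rw [hA.apply_clm, real_inner_comm]
  have hAu' := A.hasFDerivAt.comp_hasDerivAt t hu'
  have hAu := A.hasFDerivAt.comp_hasDerivAt t hu
  refine ((hAu'.inner ℝ hu').add hAu.norm_sq).congr_deriv ?_
  simp only [Function.comp_apply, inner_add_right, hsymm, real_inner_comm (A (u t))]
  ring

end Energy

theorem stmt1_general {H : Type*} [NormedAddCommGroup H] [InnerProductSpace ℝ H]
    [FiniteDimensional ℝ H]
    (A : H →L[ℝ] H) (hA : IsSelfAdjoint A)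
    (hApos : ∀ x : H, x ≠ 0 → 0 < ⟪A x, x⟫)
    (T : ℝ)
    (u u' u'' f : ℝ → H) (hf : Continuous f)
    (hu' : ∀ t ∈ Set.Icc (0:ℝ) T, HasDerivAt u (u' t) t)
    (hu'' : ∀ t ∈ Set.Icc (0:ℝ) T, HasDerivAt u' (u'' t) t)
    (hode : ∀ t ∈ Set.Icc (0:ℝ) T, u'' t + A (u t) = f t)
    (u0 v0 : H) (hinit : u 0 = u0) (hinit' : u' 0 = v0) :
    ∀ t ∈ Set.Icc (0:ℝ) T,
      ⟪A (u' t), u' t⟫ + ‖A (u t)‖ ^ 2 ≤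
        Real.exp t * (‖A u0‖ ^ 2 + ⟪A v0, v0⟫ +
          ∫ θ in (0:ℝ)..t, Real.exp (-θ) * ⟪A (f θ), f θ⟫) := by
  have hApositive : A.IsPositive := by
    refine (A.isPositive_iff).2 ⟨hA.isSymmetric, fun x => ?_⟩
    rcases eq_or_ne x 0 with rfl | hx
    · simp
    · exact (hApos x hx).le
  intro t ht
  have hbound := le_exp_mul_integral_of_hasDerivAt_le_mul_add (K := 1)
    (g := fun θ => ⟪A (f θ), f θ⟫) (by fun_prop)
    (fun s hs => hasDerivAt_inner_map_add_norm_map_sq hA.isSymmetric (hu' s hs) (hu'' s hs))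
    (fun s hs => by
      rw [hode s hs]
      linarith [hApositive.two_mul_inner_le (u' s) (f s), sq_nonneg ‖A (u s)‖]) t ht
  simpa [hinit, hinit', add_comm ⟪A v0, v0⟫] using hbound

theorem stmt1 {H : Type*} [NormedAddCommGroup H] [InnerProductSpace ℝ H]
    [FiniteDimensional ℝ H]
    (A : H →L[ℝ] H) (hA : IsSelfAdjoint A)
    (hApos : ∀ x : H, x ≠ 0 → 0 < ⟪A x, x⟫)
    (T : ℝ) (hT : 0 ≤ T)
    (u u' u'' f : ℝ → H) (hf : Continuous f)
    (hu' : ∀ t ∈ Set.Icc (0:ℝ) T, HasDerivAt u (u' t) t)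
    (hu'' : ∀ t ∈ Set.Icc (0:ℝ) T, HasDerivAt u' (u'' t) t)
    (hode : ∀ t ∈ Set.Icc (0:ℝ) T, u'' t + A (u t) = f t)
    (u0 v0 : H) (hinit : u 0 = u0) (hinit' : u' 0 = v0) :
    ∀ t ∈ Set.Icc (0:ℝ) T,
      ⟪A (u' t), u' t⟫ + ‖A (u t)‖ ^ 2 ≤
        Real.exp t * (‖A u0‖ ^ 2 + ⟪A v0, v0⟫ +
          ∫ θ in (0:ℝ)..t, Real.exp (-θ) * ⟪A (f θ), f θ⟫) :=
  stmt1_general A hA hApos T u u' u'' f hf hu' hu'' hode u0 v0 hinit hinit'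
end

section
/- Let A = A* ≥ 0 on a finite-dimensional Hilbert space, σ ≥ 1/2, τ > 0, and D = A + (σ − 1/2) τ A². If y^{n+1} satisfies (y^{n+1} − yⁿ)/τ + A(σ y^{n+1} + (1−σ) yⁿ) = φⁿ, then ‖y^{n+1}‖_D² ≤ ‖yⁿ‖_D² + (τ/2) ‖φⁿ‖². -/
/-!
With `κ = (σ - 1/2) τ`, `u = ½ A (y¹ + y⁰)` and `v = (y¹ - y⁰ + κ A (y¹ - y⁰)) / τ`, the scheme
says exactly `φ = u + v`, while `D = A (1 + κ A)` and self-adjointness give the energy identity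
`‖y¹‖_D² - ‖y⁰‖_D² = ⟪D (y¹ + y⁰), y¹ - y⁰⟫ = 2τ ⟪u, v⟫`. Conclude with `⟪u, v⟫ ≤ ‖u + v‖² / 4`.
-/

open scoped RealInnerProductSpace

section

variable {E : Type*} [NormedAddCommGroup E] [InnerProductSpace ℝ E]

theorem real_inner_le_norm_add_sq_div_four (x y : E) : ⟪x, y⟫ ≤ ‖x + y‖ ^ 2 / 4 := by
  nlinarith [norm_add_sq_real x y, norm_sub_sq_real x y, sq_nonneg ‖x - y‖]

namespace IsSelfAdjoint

variable [CompleteSpace E] {A : E →L[ℝ] E}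

theorem inner_apply_self_sub_inner_apply_self (hA : IsSelfAdjoint A) (x y : E) :
    ⟪A x, x⟫ - ⟪A y, y⟫ = ⟪A (x + y), x - y⟫ := by
  have hxy : ⟪A x, y⟫ = ⟪A y, x⟫ := by rw [real_inner_comm]; exact (hA.isSymmetric y x).symm
  simp only [map_add, inner_add_left, inner_sub_right, hxy]
  ring

theorem add_smul_comp_self (hA : IsSelfAdjoint A) (κ : ℝ) :
    IsSelfAdjoint (A + κ • (A ∘L A)) :=
  hA.add ((IsSelfAdjoint.all κ).smul (hA.pow 2))

theorem inner_add_smul_comp_self_apply (hA : IsSelfAdjoint A) (κ : ℝ) (x y : E) :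
    ⟪(A + κ • (A ∘L A)) x, y⟫ = ⟪A x, y + κ • A y⟫ := by
  have hsymm : ⟪A (A x), y⟫ = ⟪A x, A y⟫ := hA.isSymmetric (A x) y
  simp only [add_apply, smul_apply, ContinuousLinearMap.comp_apply, inner_add_left,
    inner_add_right, real_inner_smul_left, real_inner_smul_right, hsymm]

end IsSelfAdjoint

end

theorem stmt2_general {H : Type*} [NormedAddCommGroup H] [InnerProductSpace ℝ H]
    [FiniteDimensional ℝ H]
    (A : H →L[ℝ] H) (hA : IsSelfAdjoint A)
    (σ τ : ℝ) (hτ : 0 < τ)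
    (D : H →L[ℝ] H) (hD : D = A + ((σ - 1/2) * τ) • (A ∘L A))
    (y0 y1 φ : H)
    (hscheme : (1/τ) • (y1 - y0) + A (σ • y1 + (1 - σ) • y0) = φ) :
    ⟪D y1, y1⟫ ≤ ⟪D y0, y0⟫ + (τ/2) * ‖φ‖ ^ 2 := by
  set κ := (σ - 1/2) * τ
  set u : H := (1/2 : ℝ) • A (y1 + y0)
  set v : H := (1/τ) • (y1 - y0 + κ • A (y1 - y0))
  have hφ : φ = u + v := by
    have hweights : σ • y1 + (1 - σ) • y0 = (1/2 : ℝ) • (y1 + y0) + (σ - 1/2) • (y1 - y0) := by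
      module
    have hκ : 1 / τ * κ = σ - 1/2 := by simp only [κ]; field_simp
    rw [← hscheme, hweights]
    simp only [u, v, map_add, map_smul, smul_add, smul_smul, hκ]
    abel
  have henergy : ⟪D y1, y1⟫ - ⟪D y0, y0⟫ = 2 * τ * ⟪u, v⟫ := by
    rw [hD, (hA.add_smul_comp_self κ).inner_apply_self_sub_inner_apply_self,
      hA.inner_add_smul_comp_self_apply, real_inner_smul_left, real_inner_smul_right]
    field_simp
  calc ⟪D y1, y1⟫ = ⟪D y0, y0⟫ + 2 * τ * ⟪u, v⟫ := by linarith
    _ ≤ ⟪D y0, y0⟫ + 2 * τ * (‖u + v‖ ^ 2 / 4) := by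
      gcongr
      exact real_inner_le_norm_add_sq_div_four u v
    _ = ⟪D y0, y0⟫ + (τ/2) * ‖φ‖ ^ 2 := by rw [← hφ]; ring

theorem stmt2 {H : Type*} [NormedAddCommGroup H] [InnerProductSpace ℝ H]
    [FiniteDimensional ℝ H]
    (A : H →L[ℝ] H) (hA : IsSelfAdjoint A)
    (hAnn : ∀ x : H, 0 ≤ ⟪A x, x⟫)
    (σ τ : ℝ) (hσ : 1/2 ≤ σ) (hτ : 0 < τ)
    (D : H →L[ℝ] H) (hD : D = A + ((σ - 1/2) * τ) • (A ∘L A))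
    (y0 y1 φ : H)
    (hscheme : (1/τ) • (y1 - y0) + A (σ • y1 + (1 - σ) • y0) = φ) :
    ⟪D y1, y1⟫ ≤ ⟪D y0, y0⟫ + (τ/2) * ‖φ‖ ^ 2 :=
  stmt2_general A hA σ τ hτ D hD y0 y1 φ hscheme
end

section
/- Let C₁, C₂ be self-adjoint nonnegative operators on a finite-dimensional Hilbert space, σ ≥ 1/2, τ > 0, and set B̃_α = E + στ C_α. Then the transition operator S = E − τ B̃₁^{-1}(C₁ + C₂) B̃₂^{-1} can be written as S = ((2σ−1)/(2σ)) E + (1/(2σ)) S₁ S₂, where S_α = (E + στ C_α)^{-1}(E − στ C_α), and consequently ‖S‖ ≤ 1. -/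
open scoped RealInnerProductSpace

/-!
Write `a = στ`, `B_α = 1 + a C_α`, `D_α = 1 - a C_α`. Expanding the products gives
`((2σ-1)/(2σ)) B₁B₂ + (1/(2σ)) D₁D₂ = B₁B₂ - τ(C₁+C₂)`; sandwiching this between `B₁⁻¹` and
`B₂⁻¹`, and moving `D₂` past `B₂⁻¹` (both are functions of `C₂`), gives the factorization.
For accretive `C`, `‖(1 - aC)y‖ ≤ ‖(1 + aC)y‖`, so each Cayley transform `S_α = B_α⁻¹D_α` is a
contraction, and `S` is a convex combination of two points of the closed unit ball.
-/

theorem norm_sub_le_norm_add_of_inner_nonneg {H : Type*} [NormedAddCommGroup H]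
    [InnerProductSpace ℝ H] {y z : H} (h : 0 ≤ ⟪y, z⟫) : ‖y - z‖ ≤ ‖y + z‖ := by
  refine (pow_le_pow_iff_left₀ (norm_nonneg _) (norm_nonneg _) two_ne_zero).1 ?_
  rw [norm_sub_sq_real, norm_add_sq_real]
  linarith

theorem commute_one_sub_smul_one_add_smul {R A : Type*} [CommSemiring R] [Ring A] [Algebra R A]
    (a : R) (c : A) : Commute (1 - a • c) (1 + a • c) :=
  (Commute.one_left _).sub_left ((Commute.one_right _).smul_left a |>.add_right
    (((Commute.refl c).smul_left a).smul_right a))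

theorem norm_inv_mul_one_sub_smul_le_one {H : Type*} [NormedAddCommGroup H]
    [InnerProductSpace ℝ H] {C : H →L[ℝ] H} (hC : ∀ x, 0 ≤ ⟪C x, x⟫) {a : ℝ} (ha : 0 ≤ a)
    (u : (H →L[ℝ] H)ˣ) (hu : (u : H →L[ℝ] H) = 1 + a • C) :
    ‖↑u⁻¹ * (1 - a • C)‖ ≤ 1 := by
  have hcomm : Commute (1 - a • C) ↑u⁻¹ :=
    (hu ▸ commute_one_sub_smul_one_add_smul a C).units_inv_right
  rw [← hcomm.eq]
  refine ContinuousLinearMap.opNorm_le_bound _ zero_le_one fun x => ?_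
  set y := (↑u⁻¹ : H →L[ℝ] H) x
  have hy : y + a • C y = x := by
    simpa [hu] using congrArg (fun T : H →L[ℝ] H => T x) u.mul_inv
  have hyCy : 0 ≤ ⟪y, a • C y⟫ := by
    rw [real_inner_smul_right, real_inner_comm]
    exact mul_nonneg ha (hC y)
  calc ‖((1 - a • C) * ↑u⁻¹) x‖ = ‖y - a • C y‖ := by simp [y]
    _ ≤ ‖y + a • C y‖ := norm_sub_le_norm_add_of_inner_nonneg hyCy
    _ = 1 * ‖x‖ := by rw [hy, one_mul]

theorem one_sub_smul_inv_mul_add_mul_inv_eq {𝕜 A : Type*} [Field 𝕜] [Ring A] [Algebra 𝕜 A]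
    {σ τ : 𝕜} (hσ : 2 * σ ≠ 0) {c₁ c₂ : A} (u₁ u₂ : Aˣ)
    (hu₁ : (u₁ : A) = 1 + (σ * τ) • c₁) (hu₂ : (u₂ : A) = 1 + (σ * τ) • c₂) :
    1 - τ • (↑u₁⁻¹ * ((c₁ + c₂) * ↑u₂⁻¹)) =
      ((2 * σ - 1) / (2 * σ)) • 1 +
        (1 / (2 * σ)) • ((↑u₁⁻¹ * (1 - (σ * τ) • c₁)) * (↑u₂⁻¹ * (1 - (σ * τ) • c₂))) := by
  set a := σ * τ with ha
  have hmid : ((2 * σ - 1) / (2 * σ)) • ((u₁ : A) * u₂) +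
      (1 / (2 * σ)) • ((1 - a • c₁) * (1 - a • c₂)) = u₁ * u₂ - τ • (c₁ + c₂) := by
    rw [hu₁, hu₂]
    simp only [mul_add, add_mul, mul_sub, sub_mul, one_mul, mul_one, smul_mul_assoc,
      mul_smul_comm]
    have h2 : (2 : 𝕜) ≠ 0 := left_ne_zero_of_mul hσ
    have hσ0 : σ ≠ 0 := right_ne_zero_of_mul hσ
    rw [ha]
    match_scalars <;> field_simp <;> ring
  have hcomm : Commute (1 - a • c₂) ↑u₂⁻¹ :=
    (hu₂ ▸ commute_one_sub_smul_one_add_smul a c₂).units_inv_right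
  calc 1 - τ • (↑u₁⁻¹ * ((c₁ + c₂) * ↑u₂⁻¹))
      = ↑u₁⁻¹ * ((u₁ : A) * u₂ - τ • (c₁ + c₂)) * ↑u₂⁻¹ := by
        simp only [mul_sub, sub_mul, mul_smul_comm, smul_mul_assoc, mul_assoc,
          Units.mul_inv, mul_one, Units.inv_mul]
    _ = ↑u₁⁻¹ * (((2 * σ - 1) / (2 * σ)) • ((u₁ : A) * u₂) +
          (1 / (2 * σ)) • ((1 - a • c₁) * (1 - a • c₂))) * ↑u₂⁻¹ := by rw [hmid]
    _ = _ := by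
        simp only [mul_add, add_mul, mul_smul_comm, smul_mul_assoc, mul_assoc,
          Units.mul_inv, mul_one, Units.inv_mul, hcomm.eq]

theorem stmt8_general {H : Type*} [NormedAddCommGroup H] [InnerProductSpace ℝ H]
    (C₁ C₂ : H →L[ℝ] H)
    (hC₁nn : ∀ x : H, 0 ≤ ⟪C₁ x, x⟫) (hC₂nn : ∀ x : H, 0 ≤ ⟪C₂ x, x⟫)
    (σ τ : ℝ) (hσ : 1/2 ≤ σ) (hτ : 0 < τ)
    (B₁inv B₂inv : H →L[ℝ] H)
    (hB₁l : B₁inv ∘L (1 + (σ * τ) • C₁) = 1) (hB₁r : (1 + (σ * τ) • C₁) ∘L B₁inv = 1)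
    (hB₂l : B₂inv ∘L (1 + (σ * τ) • C₂) = 1) (hB₂r : (1 + (σ * τ) • C₂) ∘L B₂inv = 1)
    (S : H →L[ℝ] H) (hS : S = 1 - τ • (B₁inv ∘L (C₁ + C₂) ∘L B₂inv)) :
    S = ((2*σ - 1)/(2*σ)) • (1 : H →L[ℝ] H) +
        (1/(2*σ)) • ((B₁inv ∘L (1 - (σ * τ) • C₁)) ∘L (B₂inv ∘L (1 - (σ * τ) • C₂))) ∧
    ‖S‖ ≤ 1 := by
  -- `f ∘L g` is definitionally `f * g`, so the hypotheses are exactly the unit axioms.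
  let u₁ : (H →L[ℝ] H)ˣ := ⟨1 + (σ * τ) • C₁, B₁inv, hB₁r, hB₁l⟩
  let u₂ : (H →L[ℝ] H)ˣ := ⟨1 + (σ * τ) • C₂, B₂inv, hB₂r, hB₂l⟩
  have hσ₀ : 0 < σ := by linarith
  have hS_eq := hS.trans (one_sub_smul_inv_mul_add_mul_inv_eq (by positivity) u₁ u₂ rfl rfl)
  refine ⟨hS_eq, ?_⟩
  have hS₁ := norm_inv_mul_one_sub_smul_le_one hC₁nn (by positivity) u₁ rfl
  have hS₂ := norm_inv_mul_one_sub_smul_le_one hC₂nn (by positivity) u₂ rfl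
  rw [hS_eq, ← mem_closedBall_zero_iff]
  refine convex_closedBall 0 1 ?_ ?_ (div_nonneg (by linarith) (by positivity)) (by positivity)
    (by field_simp; ring)
  · exact mem_closedBall_zero_iff.2 ContinuousLinearMap.norm_id_le
  · exact mem_closedBall_zero_iff.2
      ((norm_mul_le _ _).trans (mul_le_one₀ hS₁ (norm_nonneg _) hS₂))

theorem stmt8 {H : Type*} [NormedAddCommGroup H] [InnerProductSpace ℝ H]
    [FiniteDimensional ℝ H]
    (C₁ C₂ : H →L[ℝ] H) (hC₁ : IsSelfAdjoint C₁) (hC₂ : IsSelfAdjoint C₂)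
    (hC₁nn : ∀ x : H, 0 ≤ ⟪C₁ x, x⟫) (hC₂nn : ∀ x : H, 0 ≤ ⟪C₂ x, x⟫)
    (σ τ : ℝ) (hσ : 1/2 ≤ σ) (hτ : 0 < τ)
    (B₁inv B₂inv : H →L[ℝ] H)
    (hB₁l : B₁inv ∘L (1 + (σ * τ) • C₁) = 1) (hB₁r : (1 + (σ * τ) • C₁) ∘L B₁inv = 1)
    (hB₂l : B₂inv ∘L (1 + (σ * τ) • C₂) = 1) (hB₂r : (1 + (σ * τ) • C₂) ∘L B₂inv = 1)
    (S : H →L[ℝ] H) (hS : S = 1 - τ • (B₁inv ∘L (C₁ + C₂) ∘L B₂inv)) :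
    S = ((2*σ - 1)/(2*σ)) • (1 : H →L[ℝ] H) +
        (1/(2*σ)) • ((B₁inv ∘L (1 - (σ * τ) • C₁)) ∘L (B₂inv ∘L (1 - (σ * τ) • C₂))) ∧
    ‖S‖ ≤ 1 :=
  stmt8_general C₁ C₂ hC₁nn hC₂nn σ τ hσ hτ B₁inv B₂inv hB₁l hB₁r hB₂l hB₂r S hS
end

section
/- Let A = A* > 0 and χ₁, χ₂ self-adjoint nonnegative with χ₁ + χ₂ = E on a finite-dimensional Hilbert space, σ ≥ 1/2, τ > 0, and B_α = E + στ χ_α A. If y^{n+1} satisfies the factorized scheme B₁B₂ (y^{n+1} − yⁿ)/τ + A yⁿ = φⁿ, then ‖B₂ y^{n+1}‖_A ≤ ‖B₂ yⁿ‖_A + τ ‖B₁^{-1} φⁿ‖_A. -/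
/-!
Write `p = B₁⁻¹ A yⁿ`. The scheme gives `B₂ yⁿ⁺¹ = (B₂ yⁿ - τ p) + τ B₁⁻¹ φⁿ`, so by the triangle
inequality for the `A`-seminorm it suffices that the homogeneous step `B₂ yⁿ ↦ B₂ yⁿ - τ p` does not
increase it. Since `A B₂` is symmetric and `A yⁿ = B₁ p`,
`(A B₂ yⁿ, p) = (B₁ p, B₂ p) = ‖p‖² + στ (A p, p) + (στ)² (χ₁ A p, χ₂ A p)`,
and the last inner product is nonnegative because `0 ≤ χ₁ ≤ 1` forces `‖χ₁ q‖² ≤ (χ₁ q, q)`.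
Hence `2 (A B₂ yⁿ, p) ≥ 2στ (A p, p) ≥ τ (A p, p)` as `σ ≥ 1/2`, which is exactly the condition
for `‖B₂ yⁿ - τ p‖_A ≤ ‖B₂ yⁿ‖_A`.
-/

open scoped RealInnerProductSpace

namespace ContinuousLinearMap

variable {H : Type*} [NormedAddCommGroup H] [InnerProductSpace ℝ H]

theorem real_inner_map_comm {T : H →L[ℝ] H} (hT : T.IsSymmetric) (x y : H) :
    ⟪T x, y⟫ = ⟪T y, x⟫ := by
  rw [hT.apply_clm, real_inner_comm]

theorem IsPositive.inner_map_sq_le {T : H →L[ℝ] H} (hT : T.IsPositive) (x y : H) :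
    ⟪T x, y⟫ ^ 2 ≤ ⟪T x, x⟫ * ⟪T y, y⟫ := by
  have hcs := LinearMap.BilinForm.apply_mul_apply_le_of_forall_zero_le
    ((innerₗ H).comp (T : H →ₗ[ℝ] H)) (fun z => hT.inner_nonneg_left z) x y
  simp only [LinearMap.comp_apply, coe_coe, innerₗ_apply_apply] at hcs
  rwa [← real_inner_map_comm hT.isSymmetric x y, ← sq] at hcs

theorem IsPositive.sqrt_inner_map_add_le {T : H →L[ℝ] H} (hT : T.IsPositive) (x y : H) :
    √⟪T (x + y), x + y⟫ ≤ √⟪T x, x⟫ + √⟪T y, y⟫ := by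
  have hx := hT.inner_nonneg_left x
  have hy := hT.inner_nonneg_left y
  have hcross : ⟪T x, y⟫ ≤ √⟪T x, x⟫ * √⟪T y, y⟫ := by
    rw [← Real.sqrt_mul hx]
    exact Real.le_sqrt_of_sq_le (hT.inner_map_sq_le x y)
  have hexpand : ⟪T (x + y), x + y⟫ = ⟪T x, x⟫ + 2 * ⟪T x, y⟫ + ⟪T y, y⟫ := by
    simp only [map_add, inner_add_left, inner_add_right,
      real_inner_map_comm hT.isSymmetric y x]
    ring
  rw [Real.sqrt_le_left (by positivity), hexpand]
  nlinarith [Real.sq_sqrt hx, Real.sq_sqrt hy]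

theorem sqrt_inner_map_smul (T : H →L[ℝ] H) (c : ℝ) (x : H) :
    √⟪T (c • x), c • x⟫ = |c| * √⟪T x, x⟫ := by
  rw [map_smul, real_inner_smul_left, real_inner_smul_right, ← mul_assoc, ← sq,
    Real.sqrt_mul (sq_nonneg c), Real.sqrt_sq_eq_abs]

theorem IsPositive.norm_map_sq_le_inner {T : H →L[ℝ] H} (hT : T.IsPositive)
    (hT₁ : (1 - T).IsPositive) (x : H) : ‖T x‖ ^ 2 ≤ ⟪T x, x⟫ := by
  have hle_one : ⟪T (T x), T x⟫ ≤ ‖T x‖ ^ 2 := by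
    have := hT₁.inner_nonneg_left (T x)
    rwa [sub_apply, one_apply_eq_self, inner_sub_left, real_inner_self_eq_norm_sq,
      sub_nonneg] at this
  -- Cauchy–Schwarz for `T`: `‖T x‖⁴ ≤ ⟪T x, x⟫ ⟪T (T x), T x⟫ ≤ ⟪T x, x⟫ ‖T x‖²`.
  have hcs := hT.inner_map_sq_le x (T x)
  rw [real_inner_self_eq_norm_sq] at hcs
  nlinarith [hT.inner_nonneg_left x, sq_nonneg ‖T x‖]

theorem inner_map_map_nonneg_of_add_eq_one {S T : H →L[ℝ] H} (hS : S.IsPositive)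
    (hT : T.IsPositive) (hST : S + T = 1) (x : H) : 0 ≤ ⟪S x, T x⟫ := by
  obtain rfl : T = 1 - S := eq_sub_of_add_eq' hST
  have := hS.norm_map_sq_le_inner hT x
  rw [sub_apply, one_apply_eq_self, inner_sub_right, real_inner_self_eq_norm_sq]
  linarith

end ContinuousLinearMap

section FactorizedScheme

open ContinuousLinearMap

variable {H : Type*} [NormedAddCommGroup H] [InnerProductSpace ℝ H] {A χ₁ χ₂ : H →L[ℝ] H}

theorem inner_factor_apply_factor_apply (hχ : χ₁ + χ₂ = 1) (s : ℝ) (p : H) :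
    ⟪(1 + s • (χ₁ ∘L A)) p, (1 + s • (χ₂ ∘L A)) p⟫ =
      ‖p‖ ^ 2 + s * ⟪A p, p⟫ + s ^ 2 * ⟪χ₁ (A p), χ₂ (A p)⟫ := by
  have hsplit : ⟪χ₁ (A p), p⟫ + ⟪χ₂ (A p), p⟫ = ⟪A p, p⟫ := by
    rw [← inner_add_left, ← add_apply, hχ, one_apply_eq_self]
  simp only [add_apply, one_apply_eq_self, smul_apply, comp_apply, inner_add_left,
    inner_add_right, real_inner_smul_left, real_inner_smul_right, real_inner_self_eq_norm_sq]
  linear_combination s * hsplit - s * real_inner_comm p (χ₂ (A p))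

theorem inner_map_factor_apply (hA : A.IsSymmetric) (hχ : χ₂.IsSymmetric) (s : ℝ) (y p : H) :
    ⟪A ((1 + s • (χ₂ ∘L A)) y), p⟫ = ⟪A y, (1 + s • (χ₂ ∘L A)) p⟫ := by
  simp only [add_apply, one_apply_eq_self, smul_apply, comp_apply, map_add, map_smul,
    inner_add_left, inner_add_right, real_inner_smul_left, real_inner_smul_right]
  rw [hA.apply_clm (χ₂ (A y)), hχ.apply_clm]

theorem inner_map_sub_smul_le (hA : A.IsSymmetric) {τ : ℝ} (hτ : 0 ≤ τ) {a p : H}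
    (h : τ * ⟪A p, p⟫ ≤ 2 * ⟪A a, p⟫) : ⟪A (a - τ • p), a - τ • p⟫ ≤ ⟪A a, a⟫ := by
  have hexpand : ⟪A (a - τ • p), a - τ • p⟫ = ⟪A a, a⟫ - τ * (2 * ⟪A a, p⟫ - τ * ⟪A p, p⟫) := by
    simp only [map_sub, map_smul, inner_sub_left, inner_sub_right, real_inner_smul_left,
      real_inner_smul_right, real_inner_map_comm hA p a]
    ring
  rw [hexpand]
  nlinarith

theorem inner_map_factor_sub_smul_le (hA : A.IsPositive) (hχ₁ : χ₁.IsPositive)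
    (hχ₂ : χ₂.IsPositive) (hχ : χ₁ + χ₂ = 1) {σ τ : ℝ} (hσ : 1 / 2 ≤ σ) (hτ : 0 ≤ τ)
    {y p : H} (hp : A y = (1 + (σ * τ) • (χ₁ ∘L A)) p) :
    ⟪A ((1 + (σ * τ) • (χ₂ ∘L A)) y - τ • p), (1 + (σ * τ) • (χ₂ ∘L A)) y - τ • p⟫ ≤
      ⟪A ((1 + (σ * τ) • (χ₂ ∘L A)) y), (1 + (σ * τ) • (χ₂ ∘L A)) y⟫ := by
  refine inner_map_sub_smul_le hA.isSymmetric hτ ?_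
  rw [inner_map_factor_apply hA.isSymmetric hχ₂.isSymmetric, hp,
    inner_factor_apply_factor_apply hχ]
  have hAp := hA.inner_nonneg_left p
  have hcross := inner_map_map_nonneg_of_add_eq_one hχ₁ hχ₂ hχ (A p)
  have hστ : τ ≤ 2 * (σ * τ) := by nlinarith
  nlinarith [mul_le_mul_of_nonneg_right hστ hAp, sq_nonneg ‖p‖, sq_nonneg (σ * τ),
    mul_nonneg (mul_nonneg hτ (sq_nonneg (σ * τ))) hcross]

theorem factor_apply_eq_of_scheme {B₁ B₂ B₁inv : H →L[ℝ] H} (hB₁ : B₁inv ∘L B₁ = 1) {τ : ℝ}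
    (hτ : τ ≠ 0) {y₀ y₁ φ : H} (hscheme : B₁ (B₂ ((1 / τ) • (y₁ - y₀))) + A y₀ = φ) :
    B₂ y₁ = (B₂ y₀ - τ • B₁inv (A y₀)) + τ • B₁inv φ := by
  have hstep : B₂ ((1 / τ) • (y₁ - y₀)) = B₁inv φ - B₁inv (A y₀) := by
    rw [← hscheme, map_add, ← comp_apply B₁inv B₁, hB₁, one_apply_eq_self, add_sub_cancel_right]
  rw [map_smul, map_sub] at hstep
  have := congrArg (τ • ·) hstep
  simp only [smul_smul, mul_one_div_cancel hτ, one_smul] at this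
  linear_combination (norm := module) this

end FactorizedScheme

theorem stmt9 {H : Type*} [NormedAddCommGroup H] [InnerProductSpace ℝ H]
    [FiniteDimensional ℝ H]
    (A : H →L[ℝ] H) (hA : IsSelfAdjoint A)
    (hApos : ∀ x : H, x ≠ 0 → 0 < ⟪A x, x⟫)
    (χ₁ χ₂ : H →L[ℝ] H) (hχ₁ : IsSelfAdjoint χ₁) (hχ₂ : IsSelfAdjoint χ₂)
    (hχ₁nn : ∀ x : H, 0 ≤ ⟪χ₁ x, x⟫) (hχ₂nn : ∀ x : H, 0 ≤ ⟪χ₂ x, x⟫)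
    (hpart : χ₁ + χ₂ = 1)
    (σ τ : ℝ) (hσ : 1/2 ≤ σ) (hτ : 0 < τ)
    (B₁ B₂ : H →L[ℝ] H)
    (hB₁ : B₁ = 1 + (σ * τ) • (χ₁ ∘L A)) (hB₂ : B₂ = 1 + (σ * τ) • (χ₂ ∘L A))
    (B₁inv : H →L[ℝ] H) (hB₁l : B₁inv ∘L B₁ = 1) (hB₁r : B₁ ∘L B₁inv = 1)
    (y0 y1 φ : H)
    (hscheme : B₁ (B₂ ((1/τ) • (y1 - y0))) + A y0 = φ) :
    Real.sqrt ⟪A (B₂ y1), B₂ y1⟫ ≤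
      Real.sqrt ⟪A (B₂ y0), B₂ y0⟫ + τ * Real.sqrt ⟪A (B₁inv φ), B₁inv φ⟫ := by
  have hApos' : A.IsPositive := (ContinuousLinearMap.isPositive_iff' A).2 ⟨hA, fun x => by
    rcases eq_or_ne x 0 with rfl | hx
    · simp
    · exact (hApos x hx).le⟩
  have hχ₁pos := (ContinuousLinearMap.isPositive_iff' χ₁).2 ⟨hχ₁, hχ₁nn⟩
  have hχ₂pos := (ContinuousLinearMap.isPositive_iff' χ₂).2 ⟨hχ₂, hχ₂nn⟩
  set p := B₁inv (A y0)
  have hp : A y0 = B₁ p := by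
    rw [← ContinuousLinearMap.comp_apply, hB₁r, one_apply_eq_self]
  have hcontract : ⟪A (B₂ y0 - τ • p), B₂ y0 - τ • p⟫ ≤ ⟪A (B₂ y0), B₂ y0⟫ := by
    subst hB₁ hB₂
    exact inner_map_factor_sub_smul_le hApos' hχ₁pos hχ₂pos hpart hσ hτ.le hp
  calc √⟪A (B₂ y1), B₂ y1⟫
      ≤ √⟪A (B₂ y0 - τ • p), B₂ y0 - τ • p⟫ + √⟪A (τ • B₁inv φ), τ • B₁inv φ⟫ := by
        rw [factor_apply_eq_of_scheme hB₁l hτ.ne' hscheme]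
        exact hApos'.sqrt_inner_map_add_le _ _
    _ ≤ √⟪A (B₂ y0), B₂ y0⟫ + τ * √⟪A (B₁inv φ), B₁inv φ⟫ := by
        rw [ContinuousLinearMap.sqrt_inner_map_smul, abs_of_pos hτ]
        gcongr
end

section
/- Let C₁,…,C_p be self-adjoint nonnegative operators on a finite-dimensional Hilbert space, σ ≥ p/2, τ > 0, R_α = (E + στ C_α)^{-1} C_α. Then the transition operator S = E − τ ∑_{α=1}^p R_α satisfies ‖S‖ ≤ 1. -/
/-!
Write `R_α = (E + στ C_α)⁻¹ C_α` and `y = (E + στ C_α)⁻¹ x`. Since the resolvent commutes with `C_α`,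
`R_α x = C_α y` and `x = y + στ C_α y`, so `⟪R_α x, x⟫ = ⟪C_α y, y⟫ + στ ‖R_α x‖² ≥ στ ‖R_α x‖²`.
Expanding `‖x - τ ∑ R_α x‖²` and bounding `‖∑ R_α x‖² ≤ p ∑ ‖R_α x‖²` (Cauchy–Schwarz), the quadratic
term `τ² p ∑ ‖R_α x‖²` is then dominated by the cross term `2τ ∑ ⟪R_α x, x⟫` because `τ p ≤ 2στ`.
-/

open scoped RealInnerProductSpace
open Finset

section

variable {H : Type*} [NormedAddCommGroup H] [InnerProductSpace ℝ H]

theorem norm_sub_smul_sum_le_norm {ι : Type*} (s : Finset ι) (v : ι → H) (x : H) {τ : ℝ}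
    (hτ : 0 ≤ τ) (hv : ∀ i ∈ s, τ * #s * ‖v i‖ ^ 2 ≤ 2 * ⟪v i, x⟫) :
    ‖x - τ • ∑ i ∈ s, v i‖ ≤ ‖x‖ := by
  have hsum_sq : ‖∑ i ∈ s, v i‖ ^ 2 ≤ #s * ∑ i ∈ s, ‖v i‖ ^ 2 :=
    (pow_le_pow_left₀ (norm_nonneg _) (norm_sum_le s v) 2).trans (sq_sum_le_card_mul_sum_sq ..)
  have hquad := mul_le_mul_of_nonneg_left (sum_le_sum hv) hτ
  rw [← mul_sum, ← mul_sum] at hquad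
  have hsq : ‖x - τ • ∑ i ∈ s, v i‖ ^ 2 ≤ ‖x‖ ^ 2 := by
    rw [norm_sub_sq_real, real_inner_smul_right, inner_sum, norm_smul, mul_pow, Real.norm_eq_abs,
      sq_abs, sum_congr rfl fun i _ => real_inner_comm (v i) x]
    nlinarith [mul_le_mul_of_nonneg_left hsum_sq (sq_nonneg τ)]
  exact pow_le_pow_iff_left₀ (norm_nonneg _) (norm_nonneg _) two_ne_zero |>.mp hsq

theorem mul_norm_sq_inverse_comp_apply_le_inner {A B : H →L[ℝ] H} {c : ℝ}
    (hA : ∀ y, 0 ≤ ⟪A y, y⟫) (hBl : B ∘L (1 + c • A) = 1) (hBr : (1 + c • A) ∘L B = 1) (x : H) :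
    c * ‖(B ∘L A) x‖ ^ 2 ≤ ⟪(B ∘L A) x, x⟫ := by
  let U : (H →L[ℝ] H)ˣ := ⟨1 + c • A, B, hBr, hBl⟩
  have hcomm : B * A = A * B :=
    (Commute.units_inv_right (u := U) (Commute.one_right A |>.add_right
      ((Commute.refl A).smul_right c))).eq.symm
  have hx : x = B x + c • A (B x) := by
    simpa using (congrArg (· x) hBr).symm
  have happly : (B ∘L A) x = A (B x) := congrArg (· x) hcomm
  calc c * ‖(B ∘L A) x‖ ^ 2 ≤ ⟪A (B x), B x⟫ + c * ‖A (B x)‖ ^ 2 := by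
        rw [happly]; linarith [hA (B x)]
    _ = ⟪A (B x), B x + c • A (B x)⟫ := by
        rw [inner_add_right, real_inner_smul_right, real_inner_self_eq_norm_sq]
    _ = ⟪(B ∘L A) x, x⟫ := by rw [← hx, happly]

end

theorem stmt12_general {H : Type*} [NormedAddCommGroup H] [InnerProductSpace ℝ H]
    (p : ℕ)
    (C : Fin p → (H →L[ℝ] H))
    (hCnn : ∀ α, ∀ x : H, 0 ≤ ⟪C α x, x⟫)
    (σ τ : ℝ) (hσ : (p : ℝ)/2 ≤ σ) (hτ : 0 < τ)
    (Binv : Fin p → (H →L[ℝ] H))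
    (hBl : ∀ α, Binv α ∘L (1 + (σ * τ) • C α) = 1)
    (hBr : ∀ α, (1 + (σ * τ) • C α) ∘L Binv α = 1) :
    ‖(1 : H →L[ℝ] H) - τ • ∑ α, Binv α ∘L C α‖ ≤ 1 := by
  refine ContinuousLinearMap.opNorm_le_bound _ zero_le_one fun x => ?_
  rw [one_mul]
  have hτp : τ * p ≤ 2 * (σ * τ) := by nlinarith
  have hR : ∀ α ∈ (univ : Finset (Fin p)), τ * #(univ : Finset (Fin p)) *
      ‖(Binv α ∘L C α) x‖ ^ 2 ≤ 2 * ⟪(Binv α ∘L C α) x, x⟫ := fun α _ => by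
    rw [card_fin]
    nlinarith [mul_norm_sq_inverse_comp_apply_le_inner (hCnn α) (hBl α) (hBr α) x,
      sq_nonneg ‖(Binv α ∘L C α) x‖]
  simpa using norm_sub_smul_sum_le_norm univ (fun α => (Binv α ∘L C α) x) x hτ.le hR

theorem stmt12 {H : Type*} [NormedAddCommGroup H] [InnerProductSpace ℝ H]
    [FiniteDimensional ℝ H]
    (p : ℕ) (hp : 1 ≤ p)
    (C : Fin p → (H →L[ℝ] H))
    (hCsa : ∀ α, IsSelfAdjoint (C α))
    (hCnn : ∀ α, ∀ x : H, 0 ≤ ⟪C α x, x⟫)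
    (σ τ : ℝ) (hσ : (p : ℝ)/2 ≤ σ) (hτ : 0 < τ)
    (Binv : Fin p → (H →L[ℝ] H))
    (hBl : ∀ α, Binv α ∘L (1 + (σ * τ) • C α) = 1)
    (hBr : ∀ α, (1 + (σ * τ) • C α) ∘L Binv α = 1) :
    ‖(1 : H →L[ℝ] H) - τ • ∑ α, Binv α ∘L C α‖ ≤ 1 :=
  stmt12_general p C hCnn σ τ hσ hτ Binv hBl hBr
end

section
/- Let A = A* > 0 and χ₁,…,χ_p self-adjoint nonnegative with ∑χ_α = E, σ ≥ p/2, τ > 0. If y^{n+1} satisfies the regularized additive scheme (y^{n+1} − yⁿ)/τ + ∑_{α=1}^p (E + στ χ_α A)^{-1} χ_α A yⁿ = φⁿ, then ‖y^{n+1}‖_A ≤ ‖yⁿ‖_A + τ ‖φⁿ‖_A. -/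
/-!
Write `‖·‖_A` for the energy seminorm `√⟪A x, x⟫` and `w_α = (E + στ χ_α A)⁻¹ χ_α A yⁿ`, so that
`y^{n+1} = (yⁿ - τ ∑ w_α) + τ φⁿ`. Applying the nonnegative `χ_α` to
`A yⁿ - στ A w_α` gives back `w_α`, whence `στ ‖w_α‖²_A ≤ ⟪A yⁿ, w_α⟫`. Together with
`‖∑ w_α‖²_A ≤ p ∑ ‖w_α‖²_A` this yields
`‖yⁿ - τ ∑ w_α‖²_A ≤ ‖yⁿ‖²_A - τ² (2σ - p) ∑ ‖w_α‖²_A ≤ ‖yⁿ‖²_A`,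
and the triangle inequality for `‖·‖_A` finishes the proof.
-/

open scoped RealInnerProductSpace
open Finset

namespace ContinuousLinearMap

variable {E : Type*} [NormedAddCommGroup E] [InnerProductSpace ℝ E]

theorem mul_inner_apply_le_inner_of_add_smul_eq {C T : E →L[ℝ] E}
    (hC : ∀ x, 0 ≤ ⟪C x, x⟫) {c : ℝ} {v w : E} (h : w + c • C (T w) = C v) :
    c * ⟪T w, w⟫ ≤ ⟪v, w⟫ := by
  have hw : C (v - c • T w) = w := by
    rw [map_sub, map_smul, ← h]
    abel
  have hsplit : ⟪v, w⟫ = ⟪C (v - c • T w), v - c • T w⟫ + c * ⟪T w, w⟫ := by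
    rw [hw, inner_sub_right, real_inner_smul_right, real_inner_comm v w,
      real_inner_comm (T w) w]
    ring
  linarith [hC (v - c • T w)]

namespace IsPositive

variable {T : E →L[ℝ] E}

theorem real_inner_sq_le (hT : T.IsPositive) (x y : E) : ⟪T x, y⟫ ^ 2 ≤ ⟪T x, x⟫ * ⟪T y, y⟫ :=
  LinearMap.BilinForm.apply_sq_le_of_symm (innerₗ E ∘ₗ T.toLinearMap) hT.inner_nonneg_left
    ⟨fun x y => (hT.inner_left_eq_inner_right x y).trans (real_inner_comm _ _)⟩ x y

theorem sqrt_inner_add_le (hT : T.IsPositive) (x y : E) :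
    √⟪T (x + y), x + y⟫ ≤ √⟪T x, x⟫ + √⟪T y, y⟫ := by
  have hx := hT.inner_nonneg_left x
  have hy := hT.inner_nonneg_left y
  have hexpand : ⟪T (x + y), x + y⟫ = ⟪T x, x⟫ + 2 * ⟪T x, y⟫ + ⟪T y, y⟫ := by
    rw [map_add, inner_add_left, inner_add_right, inner_add_right,
      hT.inner_left_eq_inner_right y x, real_inner_comm (T x) y]
    ring
  have hcs : ⟪T x, y⟫ ≤ √⟪T x, x⟫ * √⟪T y, y⟫ := by
    rw [← Real.sqrt_mul hx]
    exact (le_abs_self _).trans (Real.abs_le_sqrt (hT.real_inner_sq_le x y))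
  rw [Real.sqrt_le_iff, hexpand]
  exact ⟨by positivity, by nlinarith [Real.sq_sqrt hx, Real.sq_sqrt hy]⟩

variable (hT : T.IsPositive)

noncomputable def energySeminorm : Seminorm ℝ E :=
  Seminorm.of (fun x => √⟪T x, x⟫) hT.sqrt_inner_add_le fun c x => by
    rw [map_smul, real_inner_smul_left, real_inner_smul_right, ← mul_assoc,
      Real.sqrt_mul (mul_self_nonneg c), Real.sqrt_mul_self_eq_abs, Real.norm_eq_abs]

theorem energySeminorm_apply (x : E) : hT.energySeminorm x = √⟪T x, x⟫ := rfl

theorem sq_energySeminorm (x : E) : hT.energySeminorm x ^ 2 = ⟪T x, x⟫ :=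
  Real.sq_sqrt (hT.inner_nonneg_left x)

theorem sq_energySeminorm_sum_le {ι : Type*} (s : Finset ι) (w : ι → E) :
    hT.energySeminorm (∑ i ∈ s, w i) ^ 2 ≤ #s * ∑ i ∈ s, hT.energySeminorm (w i) ^ 2 :=
  (pow_le_pow_left₀ (apply_nonneg _ _)
    (le_sum_of_subadditive _ (map_zero _).le (map_add_le_add _) s w) 2).trans
    sq_sum_le_card_mul_sum_sq

theorem energySeminorm_sub_smul_sum_le {ι : Type*} [Fintype ι] {σ τ : ℝ}
    (hσ : (Fintype.card ι : ℝ) ≤ 2 * σ) (hτ : 0 ≤ τ) {y : E} {w : ι → E}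
    (hw : ∀ i, σ * τ * ⟪T (w i), w i⟫ ≤ ⟪T y, w i⟫) :
    hT.energySeminorm (y - τ • ∑ i, w i) ≤ hT.energySeminorm y := by
  set S := ∑ i, w i
  set Q := ∑ i, ⟪T (w i), w i⟫
  have hQ : 0 ≤ Q := sum_nonneg fun i _ => hT.inner_nonneg_left (w i)
  have hcross : σ * τ * Q ≤ ⟪T y, S⟫ := by
    rw [inner_sum, mul_sum]
    exact sum_le_sum fun i _ => hw i
  have hsum : ⟪T S, S⟫ ≤ Fintype.card ι * Q := by
    simpa only [sq_energySeminorm, card_univ] using hT.sq_energySeminorm_sum_le univ w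
  have hexpand :
      ⟪T (y - τ • S), y - τ • S⟫ = ⟪T y, y⟫ - 2 * τ * ⟪T y, S⟫ + τ ^ 2 * ⟪T S, S⟫ := by
    rw [map_sub, map_smul, inner_sub_left, inner_sub_right, inner_sub_right,
      real_inner_smul_left, real_inner_smul_right, real_inner_smul_right, real_inner_smul_left,
      hT.inner_left_eq_inner_right S y, real_inner_comm (T y) S]
    ring
  rw [energySeminorm_apply, energySeminorm_apply, hexpand]
  refine Real.sqrt_le_sqrt ?_
  nlinarith [mul_le_mul_of_nonneg_left hcross hτ, mul_le_mul_of_nonneg_left hsum (sq_nonneg τ),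
    mul_le_mul_of_nonneg_right hσ (mul_nonneg (sq_nonneg τ) hQ)]

end IsPositive
end ContinuousLinearMap

theorem stmt14_general {H : Type*} [NormedAddCommGroup H] [InnerProductSpace ℝ H]
    [FiniteDimensional ℝ H]
    (A : H →L[ℝ] H) (hA : IsSelfAdjoint A)
    (hApos : ∀ x : H, x ≠ 0 → 0 < ⟪A x, x⟫)
    (p : ℕ)
    (χ : Fin p → (H →L[ℝ] H))
    (hχnn : ∀ α, ∀ x : H, 0 ≤ ⟪χ α x, x⟫)
    (σ τ : ℝ) (hσ : (p : ℝ)/2 ≤ σ) (hτ : 0 < τ)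
    (Binv : Fin p → (H →L[ℝ] H))
    (hBr : ∀ α, (1 + (σ * τ) • (χ α ∘L A)) ∘L Binv α = 1)
    (y0 y1 φ : H)
    (hscheme : (1/τ) • (y1 - y0) + ∑ α, Binv α ((χ α) (A y0)) = φ) :
    Real.sqrt ⟪A y1, y1⟫ ≤ Real.sqrt ⟪A y0, y0⟫ + τ * Real.sqrt ⟪A φ, φ⟫ := by
  have hApositive : A.IsPositive := (A.isPositive_iff').2 ⟨hA, fun x => by
    rcases eq_or_ne x 0 with rfl | hx
    · simp
    · exact (hApos x hx).le⟩
  set q := hApositive.energySeminorm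
  set w : Fin p → H := fun α => Binv α (χ α (A y0))
  have hresolvent (α : Fin p) : w α + (σ * τ) • χ α (A (w α)) = χ α (A y0) := by
    simpa using congr($(hBr α) (χ α (A y0)))
  have hy1 : y1 = (y0 - τ • ∑ α, w α) + τ • φ := by
    rw [← hscheme, smul_add, smul_smul, mul_one_div_cancel hτ.ne', one_smul]
    abel
  have hcontract : q (y0 - τ • ∑ α, w α) ≤ q y0 :=
    hApositive.energySeminorm_sub_smul_sum_le (by rw [Fintype.card_fin]; linarith) hτ.le
      fun α => ContinuousLinearMap.mul_inner_apply_le_inner_of_add_smul_eq (hχnn α) (hresolvent α)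
  calc √⟪A y1, y1⟫ = q ((y0 - τ • ∑ α, w α) + τ • φ) := by rw [hy1]; rfl
    _ ≤ q (y0 - τ • ∑ α, w α) + q (τ • φ) := map_add_le_add _ _ _
    _ ≤ q y0 + τ * q φ := by
        rw [map_smul_eq_mul, Real.norm_of_nonneg hτ.le]
        exact add_le_add_left hcontract _

theorem stmt14 {H : Type*} [NormedAddCommGroup H] [InnerProductSpace ℝ H]
    [FiniteDimensional ℝ H]
    (A : H →L[ℝ] H) (hA : IsSelfAdjoint A)
    (hApos : ∀ x : H, x ≠ 0 → 0 < ⟪A x, x⟫)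
    (p : ℕ) (hp : 1 ≤ p)
    (χ : Fin p → (H →L[ℝ] H))
    (hχsa : ∀ α, IsSelfAdjoint (χ α))
    (hχnn : ∀ α, ∀ x : H, 0 ≤ ⟪χ α x, x⟫)
    (hsum : ∑ α, χ α = 1)
    (σ τ : ℝ) (hσ : (p : ℝ)/2 ≤ σ) (hτ : 0 < τ)
    (Binv : Fin p → (H →L[ℝ] H))
    (hBl : ∀ α, Binv α ∘L (1 + (σ * τ) • (χ α ∘L A)) = 1)
    (hBr : ∀ α, (1 + (σ * τ) • (χ α ∘L A)) ∘L Binv α = 1)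
    (y0 y1 φ : H)
    (hscheme : (1/τ) • (y1 - y0) + ∑ α, Binv α ((χ α) (A y0)) = φ) :
    Real.sqrt ⟪A y1, y1⟫ ≤ Real.sqrt ⟪A y0, y0⟫ + τ * Real.sqrt ⟪A φ, φ⟫ :=
  stmt14_general A hA hApos p χ hχnn σ τ hσ hτ Binv hBr y0 y1 φ hscheme
end
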